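/- Fix α ∈ (1/2, 1). For all integers n, j, k, the quantity g(j,k,n) := |(n+k)^{2α} − (n+j+k)^{2α} + (n+j)^{2α} − n^{2α}| satisfies g(j,k,n) ≥ C_α · |k||j| / (|k| + |j| + |n|)^{2−2α}, where C_α > 0 depends only on α, and where x^{2α} denotes |x|^{2α} (the dispersion symbol |n|^{2α}). -/
import Mathlib

open Real

/-- The dispersion symbol `m(n) = |n|^{2α}`. -/
noncomputable def dsym (α : ℝ) (m : ℤ) : ℝ := (|m| : ℝ) ^ (2 * α)

open Set

lemma rpow_mvt {p a b : ℝ} (hp : 0 < p) (ha : 0 ≤ a) (hab : a < b) :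
    ∃ c, a < c ∧ c < b ∧ b ^ p - a ^ p = p * c ^ (p - 1) * (b - a) := by
  obtain ⟨c, hc, hceq⟩ := exists_hasDerivAt_eq_slope (fun t => t ^ p)
    (fun t => p * t ^ (p - 1)) hab
    (fun t _ => (Real.continuousAt_rpow_const t p (Or.inr hp.le)).continuousWithinAt)
    (fun t ht => Real.hasDerivAt_rpow_const (Or.inl (ne_of_gt (lt_of_le_of_lt ha ht.1))))
  refine ⟨c, hc.1, hc.2, ?_⟩
  rw [hceq]
  rw [div_mul_cancel₀]
  exact sub_ne_zero_of_ne hab.ne'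

lemma cell_pos {p x : ℝ} (hp1 : 1 < p) (hp2 : p < 2) (hx : 0 ≤ x) :
    p * (p - 1) / 2 * (x + 2) ^ (p - 2) ≤ (x + 2) ^ p + x ^ p - 2 * (x + 1) ^ p := by
  have hp : (0:ℝ) < p := by linarith
  obtain ⟨c₄, hc₄1, hc₄2, e₄⟩ := rpow_mvt hp hx (show x < x + 1/2 by linarith)
  obtain ⟨c₁, hc₁1, hc₁2, e₁⟩ := rpow_mvt hp (show (0:ℝ) ≤ x + 1/2 by linarith)
    (show x + 1/2 < x + 1 by linarith)
  obtain ⟨c₂, hc₂1, hc₂2, e₂⟩ := rpow_mvt hp (show (0:ℝ) ≤ x + 1 by linarith)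
    (show x + 1 < x + 3/2 by linarith)
  obtain ⟨c₃, hc₃1, hc₃2, e₃⟩ := rpow_mvt hp (show (0:ℝ) ≤ x + 3/2 by linarith)
    (show x + 3/2 < x + 2 by linarith)
  have hsub : ∀ u : ℝ, u + 1/2 - u = 1/2 := fun u => by ring
  -- c₁ ≤ c₂
  have hA : c₁ ^ (p-1) ≤ c₂ ^ (p-1) :=
    Real.rpow_le_rpow (by linarith) (by linarith) (by linarith)
  -- c₃ - c₄ ≥ 1, lower bound for c₃^(p-1) - c₄^(p-1)
  obtain ⟨d, hd1, hd2, hd⟩ := rpow_mvt (show (0:ℝ) < p - 1 by linarith)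
    (show (0:ℝ) ≤ c₄ by linarith) (show c₄ < c₃ by linarith)
  have hq : p - 1 - 1 = p - 2 := by ring
  rw [hq] at hd
  have h7 : (x + 2) ^ (p-2) ≤ d ^ (p-2) :=
    le_trans (Real.rpow_le_rpow_of_nonpos (by linarith) (by linarith) (by linarith))
      (Real.rpow_le_rpow_of_nonpos (by linarith) hd2.le (by linarith))
  have h8 : (1:ℝ) ≤ c₃ - c₄ := by linarith
  have hxnn : (0:ℝ) ≤ (x+2) ^ (p-2) := Real.rpow_nonneg (by linarith) _
  have hB : (p - 1) * (x + 2) ^ (p-2) ≤ c₃ ^ (p-1) - c₄ ^ (p-1) := by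
    rw [hd]
    have h9 : (x+2)^(p-2) * 1 ≤ d ^ (p-2) * (c₃ - c₄) :=
      mul_le_mul h7 h8 (by norm_num) (le_trans hxnn h7)
    rw [mul_one] at h9
    calc (p-1) * (x+2)^(p-2) ≤ (p-1) * (d ^ (p-2) * (c₃ - c₄)) :=
          mul_le_mul_of_nonneg_left h9 (by linarith)
      _ = (p-1) * d ^ (p-2) * (c₃ - c₄) := by ring
  -- combine
  have key : (x + 2) ^ p + x ^ p - 2 * (x + 1) ^ p
      = p * c₃ ^ (p-1) * (1/2) + p * c₂ ^ (p-1) * (1/2)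
        - p * c₁ ^ (p-1) * (1/2) - p * c₄ ^ (p-1) * (1/2) := by
    have r₁ : x + 1 - (x + 1/2) = 1/2 := by ring
    have r₂ : x + 3/2 - (x + 1) = 1/2 := by ring
    have r₃ : x + 2 - (x + 3/2) = 1/2 := by ring
    have r₄ : x + 1/2 - x = 1/2 := by ring
    rw [r₁] at e₁; rw [r₂] at e₂; rw [r₃] at e₃; rw [r₄] at e₄
    linarith
  rw [key]
  nlinarith [mul_le_mul_of_nonneg_left hB (by linarith : (0:ℝ) ≤ p/2),
    mul_le_mul_of_nonneg_left hA (by linarith : (0:ℝ) ≤ p/2)]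

noncomputable def phi (p : ℝ) (z : ℤ) : ℝ := (|z| : ℝ) ^ p

lemma phi_cast {p : ℝ} {z : ℤ} (hz : 0 ≤ z) : phi p z = ((z : ℝ)) ^ p := by
  unfold phi
  rw [abs_of_nonneg (by exact_mod_cast hz : (0:ℝ) ≤ (z:ℝ))]

lemma cell_int_nonneg {p : ℝ} (hp1 : 1 < p) (hp2 : p < 2) {x : ℤ} (hx : 0 ≤ x) :
    p * (p - 1) / 8 * ((1 + |x| : ℤ) : ℝ) ^ (p - 2)
      ≤ phi p (x + 2) - 2 * phi p (x + 1) + phi p x := by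
  have h2 := cell_pos hp1 hp2 (show (0:ℝ) ≤ (x:ℝ) by exact_mod_cast hx)
  rw [phi_cast (by omega), phi_cast (by omega), phi_cast hx]
  rw [abs_of_nonneg hx]
  push_cast
  have hxr : (0:ℝ) ≤ (x:ℝ) := by exact_mod_cast hx
  have hb1 : ((2:ℝ) * (1 + (x:ℝ))) ^ (p-2) ≤ ((x:ℝ) + 2) ^ (p-2) :=
    Real.rpow_le_rpow_of_nonpos (by linarith) (by linarith) (by linarith)
  have hb2 : ((2:ℝ) * (1 + (x:ℝ))) ^ (p-2) = (2:ℝ)^(p-2) * (1 + (x:ℝ))^(p-2) :=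
    Real.mul_rpow (by norm_num) (by linarith)
  have hb3 : (2:ℝ)^(-1:ℝ) ≤ (2:ℝ)^(p-2) :=
    Real.rpow_le_rpow_of_exponent_le (by norm_num) (by linarith)
  have hb4 : (2:ℝ)^(-1:ℝ) = 1/2 := by
    rw [Real.rpow_neg_one]; norm_num
  have hnn : (0:ℝ) ≤ (1 + (x:ℝ)) ^ (p-2) := Real.rpow_nonneg (by linarith) _
  have hb5 : (1/2) * (1 + (x:ℝ))^(p-2) ≤ ((x:ℝ) + 2) ^ (p-2) := by
    calc (1/2) * (1 + (x:ℝ))^(p-2) ≤ (2:ℝ)^(p-2) * (1 + (x:ℝ))^(p-2) := by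
          apply mul_le_mul_of_nonneg_right _ hnn
          rw [← hb4]; exact hb3
      _ = ((2:ℝ) * (1 + (x:ℝ))) ^ (p-2) := hb2.symm
      _ ≤ ((x:ℝ) + 2) ^ (p-2) := hb1
  nlinarith [mul_le_mul_of_nonneg_left hb5 (show (0:ℝ) ≤ p*(p-1)/2 by nlinarith),
    mul_nonneg (show (0:ℝ) ≤ p*(p-1)/8 by nlinarith) hnn]

lemma cell_int {p : ℝ} (hp1 : 1 < p) (hp2 : p < 2) (x : ℤ) :
    p * (p - 1) / 8 * ((1 + |x| : ℤ) : ℝ) ^ (p - 2)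
      ≤ phi p (x + 2) - 2 * phi p (x + 1) + phi p x := by
  rcases le_or_gt 0 x with hx | hx
  · exact cell_int_nonneg hp1 hp2 hx
  rcases eq_or_lt_of_le (show x ≤ -1 by omega) with hx1 | hx1
  · -- x = -1
    subst hx1
    norm_num [phi]
    rw [Real.zero_rpow (show p ≠ 0 by linarith)]
    have h1 : (2:ℝ)^(p-2) ≤ 1 :=
      Real.rpow_le_one_of_one_le_of_nonpos (by norm_num) (by linarith)
    have h2 : (0:ℝ) ≤ (2:ℝ)^(p-2) := Real.rpow_nonneg (by norm_num) _
    nlinarith [mul_le_mul_of_nonneg_left h1 (show (0:ℝ) ≤ p*(p-1)/8 by nlinarith)]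
  · -- x ≤ -2, reflect
    set y : ℤ := -x - 2 with hy
    have hy0 : 0 ≤ y := by omega
    have h := cell_int_nonneg hp1 hp2 hy0
    have e1 : phi p (x + 2) = phi p y := by
      unfold phi; rw [← Int.cast_abs, ← Int.cast_abs, show |x + 2| = |y| by rw [← abs_neg (x+2), show -(x+2) = y by omega]]
    have e2 : phi p (x + 1) = phi p (y + 1) := by
      unfold phi; rw [← Int.cast_abs, ← Int.cast_abs, show |x + 1| = |y + 1| by rw [← abs_neg (x+1), show -(x+1) = y + 1 by omega]]
    have e3 : phi p x = phi p (y + 2) := by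
      unfold phi; rw [← Int.cast_abs, ← Int.cast_abs, show |x| = |y + 2| by rw [← abs_neg x, show -x = y + 2 by omega]]
    rw [e1, e2, e3]
    have hxy : (1 + |y| : ℤ) ≤ (1 + |x| : ℤ) := by
      rw [abs_of_nonneg hy0, abs_of_nonpos hx.le]; omega
    have hmono : ((1 + |x| : ℤ) : ℝ) ^ (p - 2) ≤ ((1 + |y| : ℤ) : ℝ) ^ (p - 2) := by
      apply Real.rpow_le_rpow_of_nonpos
      · exact_mod_cast (show (0:ℤ) < 1 + |y| by positivity)
      · exact_mod_cast hxy
      · linarith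
    have hc : (0:ℝ) ≤ p * (p-1) / 8 := by nlinarith
    nlinarith [mul_le_mul_of_nonneg_left hmono hc]

noncomputable def Dc (p : ℝ) (z : ℤ) : ℝ := phi p (z + 2) - 2 * phi p (z + 1) + phi p z

lemma row (p : ℝ) (k : ℕ) (x : ℤ) :
    phi p (x + 1 + k) - phi p (x + k) - (phi p (x + 1) - phi p x)
      = ∑ t ∈ Finset.range k, Dc p (x + t) := by
  induction k with
  | zero => simp
  | succ k ih =>
    rw [Finset.sum_range_succ, ← ih]
    unfold Dc
    push_cast
    ring_nf

lemma rect (p : ℝ) (j k : ℕ) (n : ℤ) :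
    phi p n + phi p (n + j + k) - phi p (n + j) - phi p (n + k)
      = ∑ s ∈ Finset.range j, ∑ t ∈ Finset.range k, Dc p (n + s + t) := by
  induction j with
  | zero => simp
  | succ j ih =>
    rw [Finset.sum_range_succ, ← ih]
    have hrow := row p k (n + j)
    have harg : ∀ t : ℕ, n + (j:ℤ) + (t:ℤ) = n + ((j:ℕ):ℤ) + t := fun t => rfl
    rw [show ((j+1:ℕ):ℤ) = (j:ℤ) + 1 by push_cast; ring]
    rw [show n + ((j:ℤ)+1) + (k:ℤ) = (n + j) + 1 + k by ring,
        show n + ((j:ℤ)+1) = (n + j) + 1 by ring,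
        show n + (j:ℤ) + (k:ℤ) = (n + j) + k by ring]
    linarith [hrow]

lemma rect_lower {p : ℝ} (hp1 : 1 < p) (hp2 : p < 2) (n : ℤ) (j k : ℕ)
    (hj : 1 ≤ j) (hk : 1 ≤ k) :
    p * (p - 1) / 8 * ((j : ℝ) * k) * (((|n| : ℤ) : ℝ) + j + k) ^ (p - 2)
      ≤ phi p n + phi p (n + j + k) - phi p (n + j) - phi p (n + k) := by
  rw [rect]
  have hc0 : (0:ℝ) ≤ p * (p - 1) / 8 := by nlinarith
  have cell : ∀ s ∈ Finset.range j, ∀ t ∈ Finset.range k,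
      p * (p - 1) / 8 * (((|n| : ℤ) : ℝ) + j + k) ^ (p - 2) ≤ Dc p (n + s + t) := by
    intro s hs t ht
    have hs' : (s : ℤ) ≤ (j : ℤ) - 1 := by
      have := Finset.mem_range.mp hs; omega
    have ht' : (t : ℤ) ≤ (k : ℤ) - 1 := by
      have := Finset.mem_range.mp ht; omega
    have h1 := cell_int hp1 hp2 (n + s + t)
    have h2 : (((|n| : ℤ) : ℝ) + j + k) ^ (p - 2)
        ≤ ((1 + |n + s + t| : ℤ) : ℝ) ^ (p - 2) := by
      apply Real.rpow_le_rpow_of_nonpos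
      · exact_mod_cast (show (0:ℤ) < 1 + |n + (s:ℤ) + t| by positivity)
      · have tri : |n + (s:ℤ) + t| ≤ |n| + s + t := by
          calc |n + (s:ℤ) + t| ≤ |n + (s:ℤ)| + |(t:ℤ)| := abs_add_le _ _
            _ ≤ |n| + |(s:ℤ)| + |(t:ℤ)| := by linarith [abs_add_le n (s:ℤ)]
            _ = |n| + s + t := by
                rw [abs_of_nonneg (by positivity : (0:ℤ) ≤ (s:ℤ)),
                    abs_of_nonneg (by positivity : (0:ℤ) ≤ (t:ℤ))]
        have : (1 + |n + (s:ℤ) + t| : ℤ) ≤ |n| + j + k := by linarith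
        exact_mod_cast this
      · linarith
    have h3 := mul_le_mul_of_nonneg_left h2 hc0
    have hDc : Dc p (n + s + t) = phi p ((n+s+t) + 2) - 2 * phi p ((n+s+t) + 1) + phi p (n+s+t) := rfl
    rw [hDc]
    linarith
  calc p * (p - 1) / 8 * ((j : ℝ) * k) * (((|n| : ℤ) : ℝ) + j + k) ^ (p - 2)
      = ∑ s ∈ Finset.range j, ∑ t ∈ Finset.range k,
          p * (p - 1) / 8 * (((|n| : ℤ) : ℝ) + j + k) ^ (p - 2) := by
        simp [Finset.sum_const, Finset.card_range, nsmul_eq_mul]; ring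
    _ ≤ _ := Finset.sum_le_sum (fun s hs => Finset.sum_le_sum (cell s hs))

/-- lower bound for the resonance function. -/
theorem stmt_2 (α : ℝ) (hα : 1 / 2 < α) (hα1 : α < 1) :
    ∃ C > 0, ∀ n j k : ℤ,
      C * ((|k| : ℝ) * (|j| : ℝ)) / (((|k| : ℝ) + (|j| : ℝ) + (|n| : ℝ)) ^ (2 - 2 * α))
        ≤ |dsym α (n + k) - dsym α (n + j + k) + dsym α (n + j) - dsym α n| := by
  set p : ℝ := 2 * α with hpdef
  have hp1 : 1 < p := by rw [hpdef]; linarith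
  have hp2 : p < 2 := by rw [hpdef]; linarith
  refine ⟨p * (p - 1) / 16, by nlinarith, ?_⟩
  intro n j k
  have hdsym : ∀ m : ℤ, dsym α m = phi p m := fun m => rfl
  rcases eq_or_ne j 0 with hj | hj
  · subst hj
    simp only [Int.cast_zero, abs_zero, mul_zero, zero_mul, zero_div]
    exact abs_nonneg _
  rcases eq_or_ne k 0 with hk | hk
  · subst hk
    simp only [Int.cast_zero, abs_zero, mul_zero, zero_mul, zero_div]
    exact abs_nonneg _
  set J : ℕ := j.natAbs with hJdef
  set K : ℕ := k.natAbs with hKdef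
  have hJ : 1 ≤ J := by omega
  have hK : 1 ≤ K := by omega
  set E : ℝ := dsym α (n + k) - dsym α (n + j + k) + dsym α (n + j) - dsym α n with hE
  -- find n' with the reflected rectangle expression bounded by |E|
  have habs : ∃ n' : ℤ, |n'| ≤ |n| + |j| + |k| ∧
      phi p n' + phi p (n' + J + K) - phi p (n' + J) - phi p (n' + K) ≤ |E| := by
    rcases lt_or_gt_of_ne hj with hjn | hjp <;> rcases lt_or_gt_of_ne hk with hkn | hkp
    · -- j < 0, k < 0 : n' = n + j + k, F = -E
      refine ⟨n + j + k, ?_, ?_⟩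
      · calc |n + j + k| ≤ |n + j| + |k| := abs_add_le _ _
          _ ≤ |n| + |j| + |k| := by linarith [abs_add_le n j]
      · rw [show n + j + k + (J:ℤ) + (K:ℤ) = n by omega,
            show n + j + k + (J:ℤ) = n + k by omega,
            show n + j + k + (K:ℤ) = n + j by omega]
        have : phi p (n+j+k) + phi p n - phi p (n+k) - phi p (n+j) = -E := by
          rw [hE, hdsym, hdsym, hdsym, hdsym]; ring
        rw [this]
        exact neg_le_abs E
    · -- j < 0, k > 0 : n' = n + j, F = E
      refine ⟨n + j, ?_, ?_⟩
      · calc |n + j| ≤ |n| + |j| := abs_add_le _ _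
          _ ≤ |n| + |j| + |k| := by linarith [abs_nonneg k]
      · rw [show n + j + (J:ℤ) + (K:ℤ) = n + k by omega,
            show n + j + (J:ℤ) = n by omega,
            show n + j + (K:ℤ) = n + j + k by omega]
        have : phi p (n+j) + phi p (n+k) - phi p n - phi p (n+j+k) = E := by
          rw [hE, hdsym, hdsym, hdsym, hdsym]; ring
        rw [this]
        exact le_abs_self E
    · -- j > 0, k < 0 : n' = n + k, F = E
      refine ⟨n + k, ?_, ?_⟩
      · calc |n + k| ≤ |n| + |k| := abs_add_le _ _
          _ ≤ |n| + |j| + |k| := by linarith [abs_nonneg j]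
      · rw [show n + k + (J:ℤ) + (K:ℤ) = n + j by omega,
            show n + k + (J:ℤ) = n + j + k by omega,
            show n + k + (K:ℤ) = n by omega]
        have : phi p (n+k) + phi p (n+j) - phi p (n+j+k) - phi p n = E := by
          rw [hE, hdsym, hdsym, hdsym, hdsym]; ring
        rw [this]
        exact le_abs_self E
    · -- j > 0, k > 0 : n' = n, F = -E
      refine ⟨n, by linarith [abs_nonneg j, abs_nonneg k], ?_⟩
      rw [show n + (J:ℤ) + (K:ℤ) = n + j + k by omega,
          show n + (J:ℤ) = n + j by omega,
          show n + (K:ℤ) = n + k by omega]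
      have : phi p n + phi p (n+j+k) - phi p (n+j) - phi p (n+k) = -E := by
        rw [hE, hdsym, hdsym, hdsym, hdsym]; ring
      rw [this]
      exact neg_le_abs E
  obtain ⟨n', hn', hFle⟩ := habs
  have hrect := rect_lower hp1 hp2 n' J K hJ hK
  -- set up the main size N
  set N : ℝ := (|k| : ℝ) + (|j| : ℝ) + (|n| : ℝ) with hN
  have hNpos : (0:ℝ) < N := by
    have h1 : (1:ℤ) ≤ |j| := by rw [Int.abs_eq_natAbs]; exact_mod_cast hJ
    have h1' : (1:ℝ) ≤ |(j:ℝ)| := by exact_mod_cast h1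
    have h2 : (0:ℝ) ≤ |(k:ℝ)| := abs_nonneg _
    have h3 : (0:ℝ) ≤ |(n:ℝ)| := abs_nonneg _
    rw [hN]; linarith
  -- base comparison : |n'| + J + K ≤ 2 N
  have hbase : ((|n'| : ℤ) : ℝ) + (J:ℝ) + (K:ℝ) ≤ 2 * N := by
    have hJj : (J : ℤ) = |j| := (Int.abs_eq_natAbs j).symm
    have hKk : (K : ℤ) = |k| := (Int.abs_eq_natAbs k).symm
    have : (|n'| : ℤ) + (J:ℤ) + (K:ℤ) ≤ 2 * (|k| + |j| + |n|) := by
      rw [hJj, hKk]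
      have h3 : (0:ℤ) ≤ |j| := abs_nonneg j
      have h4 : (0:ℤ) ≤ |k| := abs_nonneg k
      have h5 : (0:ℤ) ≤ |n| := abs_nonneg n
      linarith
    rw [hN]
    exact_mod_cast this
  have hbasepos : (0:ℝ) < ((|n'| : ℤ) : ℝ) + (J:ℝ) + (K:ℝ) := by
    have h0 : (0:ℝ) ≤ ((|n'| : ℤ) : ℝ) := by exact_mod_cast abs_nonneg n'
    have h1 : (1:ℝ) ≤ (J:ℝ) := by exact_mod_cast hJ
    have h2 : (0:ℝ) ≤ (K:ℝ) := by positivity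
    linarith
  -- rpow comparisons
  have hrp1 : (2 * N) ^ (p - 2) ≤ (((|n'| : ℤ) : ℝ) + (J:ℝ) + (K:ℝ)) ^ (p - 2) :=
    Real.rpow_le_rpow_of_nonpos hbasepos hbase (by linarith)
  have hrp2 : (2 * N) ^ (p - 2) = (2:ℝ) ^ (p-2) * N ^ (p-2) :=
    Real.mul_rpow (by norm_num) hNpos.le
  have hrp3 : (1/2 : ℝ) ≤ (2:ℝ) ^ (p-2) := by
    have := Real.rpow_le_rpow_of_exponent_le (show (1:ℝ) ≤ 2 by norm_num)
      (show (-1:ℝ) ≤ p - 2 by linarith)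
    rwa [Real.rpow_neg_one, show ((2:ℝ))⁻¹ = 1/2 by norm_num] at this
  have hNnn : (0:ℝ) ≤ N ^ (p-2) := Real.rpow_nonneg hNpos.le _
  have hhalf : (1/2 : ℝ) * N ^ (p-2) ≤ (((|n'| : ℤ) : ℝ) + (J:ℝ) + (K:ℝ)) ^ (p - 2) := by
    calc (1/2 : ℝ) * N ^ (p-2) ≤ (2:ℝ)^(p-2) * N ^ (p-2) :=
          mul_le_mul_of_nonneg_right hrp3 hNnn
      _ = (2 * N) ^ (p-2) := hrp2.symm
      _ ≤ _ := hrp1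
  -- rewrite goal LHS
  have e2 : (|(k:ℝ)| = (K:ℝ)) := by
    rw [← Int.cast_abs, Int.abs_eq_natAbs]; norm_cast
  have e3 : (|(j:ℝ)| = (J:ℝ)) := by
    rw [← Int.cast_abs, Int.abs_eq_natAbs]; norm_cast
  have hgoalLHS : p * (p-1) / 16 * (|(k:ℝ)| * |(j:ℝ)|) / N ^ ((2:ℝ) - p)
      = p * (p-1) / 16 * ((K:ℝ) * (J:ℝ)) * N ^ (p - 2) := by
    have e1 : N ^ ((2:ℝ) - p) = (N ^ (p - 2))⁻¹ := by
      rw [show (2:ℝ) - p = -(p - 2) by ring, Real.rpow_neg hNpos.le]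
    rw [e1, div_eq_mul_inv, inv_inv, e2, e3]
  rw [hgoalLHS]
  -- final chain
  have hc0 : (0:ℝ) ≤ p * (p-1) / 8 * ((J:ℝ) * K) := by
    have h : (0:ℝ) ≤ (J:ℝ) * K := by positivity
    exact mul_nonneg (by nlinarith) h
  calc p * (p-1) / 16 * ((K:ℝ) * (J:ℝ)) * N ^ (p - 2)
      = p * (p-1) / 8 * ((J:ℝ) * K) * ((1/2) * N ^ (p-2)) := by ring
    _ ≤ p * (p-1) / 8 * ((J:ℝ) * K) * ((((|n'| : ℤ) : ℝ) + (J:ℝ) + (K:ℝ)) ^ (p - 2)) :=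
        mul_le_mul_of_nonneg_left hhalf hc0
    _ ≤ phi p n' + phi p (n' + J + K) - phi p (n' + J) - phi p (n' + K) := hrect
    _ ≤ |E| := hFle
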